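/- For every integer q > 1 and every integer k ≥ 0, the problem Convergence(k,q) admits a proof-labeling scheme with certificates of size at most b_max(k+1) · ⌈log₂ id_max⌉ · L(n,q) bits on n-node graphs whose identifiers are assigned injectively from [id_max], where L(n,q) is the maximum number of bits required to encode a local function of a q-state finite-state dynamics over an n-node graph (under the fixed table encoding, L(n,q) ≤ q^n·⌈log₂ q⌉ + (n+1)·⌈log₂(n+1)⌉). -/

import Mathlib

/-!
STATEMENT 0: For every integer q > 1 and every integer k ≥ 0, the problem
Convergence(k,q) admits a proof-labeling scheme with certificates of size at most
b_max(k+1) · ⌈log₂ id_max⌉ · L(n,q) bits on n-node graphs whose identifiers are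
assigned injectively from [id_max], where L(n,q) is the maximum number of bits
required to encode a local function of a q-state FSD over an n-node graph
(under the fixed table encoding, L(n,q) ≤ q^n·⌈log₂ q⌉ + (n+1)·⌈log₂(n+1)⌉).
-/

/-- The closed neighborhood of a vertex. -/
def closedNbhd {V : Type*} (G : SimpleGraph V) (v : V) : Set V :=
  insert v (G.neighborSet v)

/-- `F` is a finite-state dynamics over `G`: the new state of each node depends only
on the current states of its closed neighborhood (equivalently, local functions
`f_v : Q^{N[v]} → Q` with `F(x)_v = f_v(x|_{N[v]})` exist). -/
def IsFSD {V Q : Type*} (G : SimpleGraph V) (F : (V → Q) → V → Q) : Prop :=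
  ∀ (v : V) (x y : V → Q), (∀ w ∈ closedNbhd G v, x w = y w) → F x v = F y v

/-- Every configuration reaches a fixed point after at most `k` time-steps. -/
def ConvergesIn {V Q : Type*} (F : (V → Q) → V → Q) (k : ℕ) : Prop :=
  ∀ x : V → Q, F (F^[k] x) = F^[k] x

/-- A proof-labeling scheme (verifier) for finite-state dynamics on `n`-node graphs
with state set `Q`.  The one-round verifier at a node outputs accept/reject as a
function of the node's identifier, its incident edges, its local function, its own
certificate and the certificates of its neighbors only; this is enforced by the
`locality` condition. -/
structure PLS (n : ℕ) (Q : Type*) where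
  verify : SimpleGraph (Fin n) → ((Fin n → Q) → Fin n → Q) →
      (Fin n → ℕ) → (Fin n → List Bool) → Fin n → Bool
  locality : ∀ G G' F F' ids ids' cert cert' (v : Fin n),
      (∀ w, G.Adj v w ↔ G'.Adj v w) →
      ids v = ids' v →
      (∀ w, G.Adj v w → ids w = ids' w) →
      (∀ x, F x v = F' x v) →
      cert v = cert' v →
      (∀ w, G.Adj v w → cert w = cert' w) →
      verify G F ids cert v = verify G' F' ids' cert' v

/-- Correctness of a PLS `π` for the language `L` on the instance domain `Dom`,
with certificates of (possibly instance-dependent) size `size` and identifiers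
assigned injectively from `[idMax] = {1,…,idMax}`: on yes-instances some certificate
assignment of the prescribed size makes every node accept (completeness), and on
no-instances every certificate assignment of the prescribed size is rejected at some
node (soundness). -/
def PLS.Correct {n : ℕ} {Q : Type*} (π : PLS n Q)
    (Dom L : SimpleGraph (Fin n) → ((Fin n → Q) → Fin n → Q) → Prop)
    (size : SimpleGraph (Fin n) → ((Fin n → Q) → Fin n → Q) → ℕ)
    (idMax : ℕ) : Prop :=
  ∀ G F, G.Connected → IsFSD G F → Dom G F →
    ∀ ids : Fin n → ℕ, Function.Injective ids → (∀ v, 1 ≤ ids v ∧ ids v ≤ idMax) →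
      ((L G F → ∃ cert : Fin n → List Bool,
          (∀ v, (cert v).length ≤ size G F) ∧ ∀ v, π.verify G F ids cert v = true) ∧
       (¬ L G F → ∀ cert : Fin n → List Bool,
          (∀ v, (cert v).length ≤ size G F) → ∃ v, π.verify G F ids cert v = false))

/-- `b_v(p)`: the number of edges of `G` with an endpoint at distance at most `p`
from `v`. -/
noncomputable def bv {n : ℕ} (G : SimpleGraph (Fin n)) (v : Fin n) (p : ℕ) : ℕ :=
  {e ∈ G.edgeSet | ∃ u, u ∈ e ∧ G.dist v u ≤ p}.ncard

/-- `b_max(p) = max_v b_v(p)`. -/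
noncomputable def bmax {n : ℕ} (G : SimpleGraph (Fin n)) (p : ℕ) : ℕ :=
  Finset.univ.sup fun v => bv G v p

/-!
Each node `v` certifies the rules of all nodes within distance `k`, each tagged with its level
in a breadth-first search from `v` truncated at depth `k`. Neighbours check that they agree on
shared rules, that what is recorded about a node is that node's own rule, and that a record at
level `ℓ < k` is also present one edge further at level at most `ℓ + 1`. By induction on the
distance this forces every record of a node within distance `k` of `v` to be correct, and since
after `k` steps the state of `v` only depends on those rules, `v` decides whether it is fixed
after `k` steps by simulating the dynamics it has reconstructed. Charging each recorded node to
the last edge of a shortest path from `v` shows there are at most `b_v(k+1)` records, each of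
`L(n,q)` bits.
-/

open Function Finset

namespace SimpleGraph

variable {V : Type*} {G : SimpleGraph V}

lemma Connected.dist_le_dist_add_one_of_adj (hconn : G.Connected) {v w : V} (hadj : G.Adj v w)
    (u : V) : G.dist v u ≤ G.dist w u + 1 := by
  have := hconn.dist_triangle (u := v) (v := w) (w := u)
  rw [dist_eq_one_iff_adj.mpr hadj] at this
  omega

lemma Connected.exists_adj_dist_add_one (hconn : G.Connected) {u v : V} (hne : u ≠ v) :
    ∃ w, G.Adj u w ∧ G.dist w v + 1 = G.dist u v := by
  obtain ⟨p, hp⟩ := hconn.exists_walk_length_eq_dist u v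
  cases p with
  | nil => exact absurd rfl hne
  | cons hadj p =>
    refine ⟨_, hadj, ?_⟩
    have h₁ := G.dist_le p
    have h₂ := hconn.dist_le_dist_add_one_of_adj hadj v
    simp only [Walk.length_cons] at hp
    omega

lemma Connected.dist_lt_card [Fintype V] (hconn : G.Connected) (u v : V) :
    G.dist u v < Fintype.card V := by
  obtain ⟨p, hp, hlen⟩ := hconn.exists_path_of_dist u v
  exact hlen ▸ hp.length_lt

end SimpleGraph

section Neighbourhood

variable {n : ℕ} {G : SimpleGraph (Fin n)}

/-- Sending each `u ≠ v` to the last edge of a shortest path from `v` to `u` is injective. -/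
lemma card_filter_ne_dist_le_le_bv (hconn : G.Connected) (v : Fin n) (p : ℕ) :
    #{u | u ≠ v ∧ G.dist v u ≤ p} ≤ bv G v p := by
  have hpred : ∀ u, ∃ w, u ≠ v → G.Adj u w ∧ G.dist v w + 1 = G.dist v u := fun u => by
    by_cases hu : u = v
    · exact ⟨v, fun h => absurd hu h⟩
    · obtain ⟨w, hadj, hw⟩ := hconn.exists_adj_dist_add_one hu
      exact ⟨w, fun _ => ⟨hadj, by rwa [G.dist_comm, G.dist_comm (u := v)]⟩⟩
  choose pred hpred using hpred
  rw [← Set.ncard_coe_finset, bv]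
  refine Set.ncard_le_ncard_of_injOn (fun u => s(u, pred u)) ?_ ?_
  · intro u hu
    simp only [coe_filter, mem_univ, true_and, Set.mem_ofPred_eq] at hu
    exact ⟨(hpred u hu.1).1, u, Sym2.mem_mk_left _ _, hu.2⟩
  · intro u₁ hu₁ u₂ hu₂ heq
    simp only [coe_filter, mem_univ, true_and, Set.mem_ofPred_eq] at hu₁ hu₂
    have h₁ := (hpred u₁ hu₁.1).2
    have h₂ := (hpred u₂ hu₂.1).2
    rcases Sym2.eq_iff.mp heq with ⟨h, _⟩ | ⟨h, h'⟩
    · exact h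
    · rw [h'] at h₁; rw [← h] at h₂; omega

end Neighbourhood

section Locality

variable {V Q : Type*} {G : SimpleGraph V} {F F' : (V → Q) → V → Q}

lemma IsFSD.iterate_apply_eq (hconn : G.Connected) (hF : IsFSD G F) {j : ℕ} {v : V}
    (hagree : ∀ u, G.dist v u < j → ∀ y, F' y u = F y u) (x : V → Q) :
    F'^[j] x v = F^[j] x v := by
  induction j generalizing v with
  | zero => rfl
  | succ j ih =>
    rw [iterate_succ_apply', iterate_succ_apply', hagree v (by simp)]
    refine hF v _ _ fun w hw => ih fun u hu => hagree u ?_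
    rcases hw with rfl | hadj
    · omega
    · have := hconn.dist_le_dist_add_one_of_adj hadj u
      omega

lemma IsFSD.apply_iterate_eq_iff (hconn : G.Connected) (hF : IsFSD G F) {k : ℕ} {v : V}
    (hagree : ∀ u, G.dist v u ≤ k → ∀ y, F' y u = F y u) (x : V → Q) :
    F' (F'^[k] x) v = F'^[k] x v ↔ F (F^[k] x) v = F^[k] x v := by
  simp only [← iterate_succ_apply' F', ← iterate_succ_apply' F]
  rw [hF.iterate_apply_eq hconn (fun u hu => hagree u (by omega)),
    hF.iterate_apply_eq hconn (fun u hu => hagree u (by omega))]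

end Locality

section Coding

variable {α β : Type*}

lemma List.flatMap_injective_of_length_eq {c : β → List α} (hc : Injective c) {w : ℕ}
    (hw : 0 < w) (hlen : ∀ b, (c b).length = w) : Injective fun l : List β => l.flatMap c := by
  intro l₁ l₂ h
  induction l₁ generalizing l₂ with
  | nil =>
    cases l₂ with
    | nil => rfl
    | cons b l₂ =>
      simpa [← List.length_eq_zero_iff, hlen, hw.ne'] using (congrArg List.length h).symm
  | cons b₁ l₁ ih =>
    cases l₂ with
    | nil => simpa [← List.length_eq_zero_iff, hlen, hw.ne'] using congrArg List.length h
    | cons b₂ l₂ =>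
      obtain ⟨hb, hl⟩ := List.append_inj h (by rw [hlen, hlen])
      rw [hc hb, ih hl]

noncomputable def binaryCode [Fintype β] {w : ℕ} (h : Fintype.card β ≤ 2 ^ w) :
    β ↪ List.Vector Bool w :=
  Classical.choice (Embedding.nonempty_of_card_le (by simpa using h))

end Coding

namespace ConvergenceScheme

variable {n q k : ℕ} {G : SimpleGraph (Fin n)} {F : (Fin n → Fin q) → Fin n → Fin q}

/-- An entry `(u, ℓ, f)` records the rule `f` of node `u`, reached at level `ℓ` of a
truncated breadth-first search from the certificate's owner. Rules are functions of the
whole configuration because the verifier sees its own rule in that form. -/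
abbrev Entry (n q : ℕ) := Fin n × Fin n × ((Fin n → Fin q) → Fin q)

def width (n q : ℕ) : ℕ := q ^ n * Nat.clog 2 q + (n + 1) * Nat.clog 2 (n + 1)

lemma width_pos (hq : 1 < q) : 0 < width n q :=
  Nat.add_pos_left (Nat.mul_pos (pow_pos (by omega) n) (Nat.clog_pos one_lt_two hq)) _

lemma card_entry_le (n q : ℕ) : Fintype.card (Entry n q) ≤ 2 ^ width n q := by
  have hn : n * n ≤ (n + 1) ^ (n + 1) := by
    rcases Nat.eq_zero_or_pos n with rfl | hn
    · simp
    · calc n * n ≤ (n + 1) ^ 2 := by nlinarith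
        _ ≤ (n + 1) ^ (n + 1) := Nat.pow_le_pow_right n.succ_pos (by omega)
  calc Fintype.card (Entry n q) = n * n * q ^ q ^ n := by
        simp [mul_assoc]
    _ ≤ (n + 1) ^ (n + 1) * q ^ q ^ n := Nat.mul_le_mul_right _ hn
    _ ≤ (2 ^ Nat.clog 2 (n + 1)) ^ (n + 1) * (2 ^ Nat.clog 2 q) ^ q ^ n := by
        gcongr <;> exact Nat.le_pow_clog one_lt_two _
    _ = 2 ^ width n q := by rw [width, ← pow_mul, ← pow_mul, ← pow_add]; ring_nf

noncomputable def encode (l : List (Entry n q)) : List Bool :=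
  l.flatMap fun e => (binaryCode (card_entry_le n q) e).toList

lemma length_encode (l : List (Entry n q)) : (encode l).length = l.length * width n q := by
  simp [encode, List.length_flatMap]

lemma encode_injective (hq : 1 < q) : Injective (encode (n := n) (q := q)) :=
  List.flatMap_injective_of_length_eq
    (List.Vector.toList_injective.comp (binaryCode (card_entry_le n q)).injective)
    (width_pos hq) fun _ => List.Vector.toList_length _

noncomputable def decode : List Bool → List (Entry n q) := invFun encode

lemma decode_encode (hq : 1 < q) (l : List (Entry n q)) : decode (encode l) = l :=
  leftInverse_invFun (encode_injective hq) l

/-- Node `v`'s reconstruction of the dynamics. Unrecorded nodes keep their state; this is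
harmless because within `k` steps only the rules at distance at most `k` reach `v`. -/
def localModel (rule : (Fin n → Fin q) → Fin q) (own : List (Entry n q)) (v : Fin n) :
    (Fin n → Fin q) → Fin n → Fin q :=
  fun x u => if u = v then rule x else
    match own.find? (fun e => e.1 = u) with
    | some e => e.2.2 x
    | none => x u

lemma localModel_apply_self (rule : (Fin n → Fin q) → Fin q) (own : List (Entry n q))
    (v : Fin n) (x : Fin n → Fin q) : localModel rule own v x v = rule x :=
  if_pos rfl

lemma localModel_apply_of_ne {rule f : (Fin n → Fin q) → Fin q} {own : List (Entry n q)}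
    {u v : Fin n} (huv : u ≠ v) (hex : ∃ e ∈ own, e.1 = u)
    (hall : ∀ e ∈ own, e.1 = u → e.2.2 = f) (x : Fin n → Fin q) :
    localModel rule own v x u = f x := by
  obtain ⟨e, he⟩ := Option.isSome_iff_exists.mp
    (List.find?_isSome.mpr (by simpa using hex) : (own.find? fun e => e.1 = u).isSome)
  have hfound : e.1 = u := by simpa using List.find?_some he
  simp only [localModel, if_neg huv, he, hall e (List.mem_of_find?_eq_some he) hfound]

/-- The tests node `v`, whose own rule is `rule`, runs on the certificate of its neighbour `w`. -/
structure EdgeChecks (k : ℕ) (rule : (Fin n → Fin q) → Fin q) (v w : Fin n)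
    (own theirs : List (Entry n q)) : Prop where
  rule_self : ∀ e ∈ theirs, e.1 = v → e.2.2 = rule
  rule_agree : ∀ e ∈ own, ∀ e' ∈ theirs, e.1 = e'.1 → e.2.2 = e'.2.2
  records_adj : 1 ≤ k → ∃ e ∈ own, e.1 = w ∧ (e.2.1 : ℕ) ≤ 1
  records_of_adj : ∀ e ∈ theirs, e.1 ≠ v → (e.2.1 : ℕ) + 1 ≤ k →
    ∃ e' ∈ own, e'.1 = e.1 ∧ (e'.2.1 : ℕ) ≤ e.2.1 + 1

def Accepts (k : ℕ) (adj : Fin n → Prop) (rule : (Fin n → Fin q) → Fin q) (v : Fin n)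
    (cert : Fin n → List (Entry n q)) : Prop :=
  (∀ w, adj w → EdgeChecks k rule v w (cert v) (cert w)) ∧
    ∀ x, localModel rule (cert v) v ((localModel rule (cert v) v)^[k] x) v =
      (localModel rule (cert v) v)^[k] x v

lemma accepts_congr {adj adj' : Fin n → Prop} {rule : (Fin n → Fin q) → Fin q}
    {v : Fin n} {cert cert' : Fin n → List (Entry n q)} (hadj : ∀ w, adj w ↔ adj' w)
    (hv : cert v = cert' v) (hw : ∀ w, adj w → cert w = cert' w) :
    Accepts k adj rule v cert ↔ Accepts k adj' rule v cert' := by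
  rw [Accepts, Accepts, hv]
  refine and_congr_left' (forall_congr' fun w => ?_)
  exact ⟨fun h ha => hw w ((hadj w).2 ha) ▸ h ((hadj w).2 ha),
    fun h ha => (hw w ha).symm ▸ h ((hadj w).1 ha)⟩

open Classical in
noncomputable def convergencePLS (n q k : ℕ) : PLS n (Fin q) where
  verify G F _ cert v := decide (Accepts k (G.Adj v) (fun x => F x v) v (decode ∘ cert))
  locality G G' F F' _ _ cert cert' v hadj _ _ hrule hv hw := by
    simp only [funext hrule]
    exact decide_eq_decide.mpr (accepts_congr hadj (by simp [hv]) fun w ha => by simp [hw w ha])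

open Classical in
lemma convergencePLS_verify_eq_true_iff {ids : Fin n → ℕ} {cert : Fin n → List Bool}
    {v : Fin n} :
    (convergencePLS n q k).verify G F ids cert v = true ↔
      Accepts k (G.Adj v) (fun x => F x v) v (decode ∘ cert) :=
  decide_eq_true_iff

section Soundness

variable {cert : Fin n → List (Entry n q)}

/-- Induction on `d`: the entry for `u` is pulled from the neighbour of `v` one step closer to
`u`, and `rule_agree` transports its correctness, which starts at the neighbours of `u`. -/
lemma recorded_of_dist_eq (hconn : G.Connected)
    (hchecks : ∀ v w, G.Adj v w → EdgeChecks k (fun x => F x v) v w (cert v) (cert w))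
    {d : ℕ} (hd : 1 ≤ d) (hdk : d ≤ k) {v u : Fin n} (hvu : G.dist v u = d) :
    (∃ e ∈ cert v, e.1 = u ∧ (e.2.1 : ℕ) ≤ d) ∧
      ∀ e ∈ cert v, e.1 = u → e.2.2 = fun x => F x u := by
  induction d, hd using Nat.le_induction generalizing v with
  | base =>
    have hadj : G.Adj v u := SimpleGraph.dist_eq_one_iff_adj.mp hvu
    exact ⟨(hchecks v u hadj).records_adj (by omega), (hchecks u v hadj.symm).rule_self⟩
  | succ d hd ih =>
    have huv : u ≠ v := by rintro rfl; simp at hvu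
    obtain ⟨w, hadj, hwu⟩ := hconn.exists_adj_dist_add_one huv.symm
    obtain ⟨⟨e, he, heu, hlevel⟩, hcorrect⟩ := ih (by omega) (v := w) (by omega)
    obtain ⟨e', he', he'u, hlevel'⟩ :=
      (hchecks v w hadj).records_of_adj e he (heu ▸ huv) (by omega)
    refine ⟨⟨e', he', he'u.trans heu, by omega⟩, fun e'' he'' he''u => ?_⟩
    rw [(hchecks v w hadj).rule_agree e'' he'' e he (he''u.trans heu.symm)]
    exact hcorrect e he heu

lemma localModel_eq_of_dist_le (hconn : G.Connected)
    (hchecks : ∀ v w, G.Adj v w → EdgeChecks k (fun x => F x v) v w (cert v) (cert w))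
    {v u : Fin n} (hvu : G.dist v u ≤ k) (x : Fin n → Fin q) :
    localModel (fun x => F x v) (cert v) v x u = F x u := by
  by_cases huv : u = v
  · subst huv
    exact localModel_apply_self _ _ _ _
  · have hpos := hconn.pos_dist_of_ne (Ne.symm huv)
    obtain ⟨⟨e, he, heu, _⟩, hcorrect⟩ := recorded_of_dist_eq hconn hchecks hpos hvu rfl
    exact localModel_apply_of_ne huv ⟨e, he, heu⟩ hcorrect x

end Soundness

lemma convergesIn_of_accepts (hconn : G.Connected) (hF : IsFSD G F)
    {cert : Fin n → List (Entry n q)}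
    (hacc : ∀ v, Accepts k (G.Adj v) (fun x => F x v) v cert) : ConvergesIn F k := by
  intro x
  funext v
  exact (hF.apply_iterate_eq_iff hconn
    (fun u hu => localModel_eq_of_dist_le hconn (fun v => (hacc v).1) hu) x).mp ((hacc v).2 x)

noncomputable def ballEntry (hconn : G.Connected) (F : (Fin n → Fin q) → Fin n → Fin q)
    (v u : Fin n) : Entry n q :=
  (u, ⟨G.dist v u, by simpa using hconn.dist_lt_card v u⟩, fun x => F x u)

noncomputable def ballEntries (hconn : G.Connected) (F : (Fin n → Fin q) → Fin n → Fin q)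
    (k : ℕ) (v : Fin n) : List (Entry n q) :=
  ({u | u ≠ v ∧ G.dist v u ≤ k} : Finset (Fin n)).toList.map (ballEntry hconn F v)

lemma mem_ballEntries {hconn : G.Connected} {v : Fin n} {e : Entry n q} :
    e ∈ ballEntries hconn F k v ↔
      ∃ u, (u ≠ v ∧ G.dist v u ≤ k) ∧ ballEntry hconn F v u = e := by
  simp [ballEntries]

lemma length_ballEntries (hconn : G.Connected) (v : Fin n) :
    (ballEntries hconn F k v).length = #{u | u ≠ v ∧ G.dist v u ≤ k} := by
  simp [ballEntries]

lemma accepts_ballEntries (hconn : G.Connected) (hF : IsFSD G F) (hconv : ConvergesIn F k)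
    (v : Fin n) : Accepts k (G.Adj v) (fun x => F x v) v (ballEntries hconn F k) := by
  have hmodel : ∀ u, G.dist v u ≤ k → ∀ x,
      localModel (fun x => F x v) (ballEntries hconn F k v) v x u = F x u := by
    intro u hu x
    by_cases huv : u = v
    · subst huv
      exact localModel_apply_self _ _ _ _
    · refine localModel_apply_of_ne (f := fun x => F x u) huv
        ⟨_, mem_ballEntries.mpr ⟨u, ⟨huv, hu⟩, rfl⟩, rfl⟩ ?_ x
      rintro _ he rfl
      obtain ⟨u, -, rfl⟩ := mem_ballEntries.mp he
      rfl
  refine ⟨fun w hadj => ⟨?_, ?_, fun hk => ?_, ?_⟩,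
    fun x => (hF.apply_iterate_eq_iff hconn hmodel x).mpr (congrFun (hconv x) v)⟩
  · rintro _ he rfl
    obtain ⟨u, -, rfl⟩ := mem_ballEntries.mp he
    rfl
  · rintro _ he _ he' hee'
    obtain ⟨u, -, rfl⟩ := mem_ballEntries.mp he
    obtain ⟨u', -, rfl⟩ := mem_ballEntries.mp he'
    cases hee'
    rfl
  · have hdist : G.dist v w = 1 := SimpleGraph.dist_eq_one_iff_adj.mpr hadj
    exact ⟨_, mem_ballEntries.mpr ⟨w, ⟨hadj.ne', by omega⟩, rfl⟩, rfl, hdist.le⟩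
  · rintro _ he huv hk
    obtain ⟨u, -, rfl⟩ := mem_ballEntries.mp he
    have := hconn.dist_le_dist_add_one_of_adj hadj u
    exact ⟨_, mem_ballEntries.mpr ⟨u, ⟨huv, by simp [ballEntry] at hk; omega⟩, rfl⟩, rfl,
      by simpa [ballEntry] using this⟩

lemma length_encode_ballEntries_le (hconn : G.Connected) {idMax : ℕ} (hid : n ≤ idMax)
    (v : Fin n) :
    (encode (ballEntries hconn F k v)).length ≤
      bmax G (k + 1) * Nat.clog 2 idMax * width n q := by
  rw [length_encode, length_ballEntries]
  have hcard : #{u | u ≠ v ∧ G.dist v u ≤ k} ≤ bmax G (k + 1) :=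
    calc #{u | u ≠ v ∧ G.dist v u ≤ k}
        ≤ #{u | u ≠ v ∧ G.dist v u ≤ k + 1} :=
          card_le_card (monotone_filter_right _ fun _ _ h => ⟨h.1, by omega⟩)
      _ ≤ bv G v (k + 1) := card_filter_ne_dist_le_le_bv hconn v (k + 1)
      _ ≤ bmax G (k + 1) := le_sup (f := fun v => bv G v (k + 1)) (mem_univ v)
  rcases Nat.eq_zero_or_pos #{u | u ≠ v ∧ G.dist v u ≤ k} with h0 | hpos
  · simp [h0]
  -- a recorded `u ≠ v` gives `idMax ≥ n ≥ 2`, hence `⌈log₂ idMax⌉ ≥ 1`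
  obtain ⟨u, hu⟩ := card_pos.mp hpos
  have huv : (u : ℕ) ≠ v := Fin.val_ne_of_ne (mem_filter.mp hu).2.1
  have hlog : 1 ≤ Nat.clog 2 idMax := Nat.clog_pos one_lt_two (by omega)
  calc #{u | u ≠ v ∧ G.dist v u ≤ k} * width n q
      ≤ bmax G (k + 1) * width n q := Nat.mul_le_mul_right _ hcard
    _ ≤ bmax G (k + 1) * Nat.clog 2 idMax * width n q := by
        gcongr
        exact Nat.le_mul_of_pos_right _ hlog

end ConvergenceScheme

open ConvergenceScheme in
/-- Convergence(k,q) admits a PLS with certificates of size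
`b_max(k+1) · ⌈log₂ id_max⌉ · L(n,q)` bits, where
`L(n,q) ≤ q^n·⌈log₂ q⌉ + (n+1)·⌈log₂(n+1)⌉`. -/
theorem statement_0 (q k n idMax : ℕ) (hq : 1 < q) (hid : n ≤ idMax) :
    ∃ Lnq : ℕ, Lnq ≤ q ^ n * Nat.clog 2 q + (n + 1) * Nat.clog 2 (n + 1) ∧
      ∃ π : PLS n (Fin q),
        π.Correct (fun _ _ => True) (fun _ F => ConvergesIn F k)
          (fun G _ => bmax G (k + 1) * Nat.clog 2 idMax * Lnq) idMax := by
  refine ⟨width n q, le_rfl, convergencePLS n q k, ?_⟩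
  intro G F hconn hF _ _ _ _
  refine ⟨fun hconv => ?_, fun hnconv cert _ => ?_⟩
  · refine ⟨fun v => encode (ballEntries hconn F k v),
      length_encode_ballEntries_le hconn hid,
      fun v => convergencePLS_verify_eq_true_iff.mpr ?_⟩
    simpa [Function.comp_def, decode_encode hq] using accepts_ballEntries hconn hF hconv v
  · by_contra! hacc
    exact hnconv (convergesIn_of_accepts hconn hF
      fun v => convergencePLS_verify_eq_true_iff.mp (eq_true_of_ne_false (hacc v)))
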